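/- Let u be an odometer on the comb graph C_n, let f_v = right_u(v) − left_u(v+1) be the net flow from spine site v to v+1 (so f_0 = −left_u(1)), let d_{v′} = down_u(v′) − up_u(v) be the net flow from tooth v′ to spine v, and let s_v = ∑_{i=1}^v (1{instr_i(u(i)) = sleep} + 1{instr_{i′}(u(i′)) = sleep}). Then u is stable under σ, instr on C_n if and only if for all v ∈ {1,…,n}: f_v = f_0 + ∑_{i=1}^v (|σ(i)| + |σ(i′)|) − s_v, and d_{v′} = |σ(v′)| − 1{instr_{v′}(u(v′)) = sleep}. -/

import Mathlib

/-! # Statement 11: flow characterization of stability on the comb graph.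

An odometer `u` on `C_n` is stable under `σ, instr` if and only if the net flows
`f_v = right_u(v) − left_u(v+1)` and `d_{v′} = down_u(v′) − up_u(v)` satisfy
`f_v = f₀ + ∑_{i=1}^v (|σ(i)| + |σ(i′)|) − s_v` and
`d_{v′} = |σ(v′)| − 1{instr_{v′}(u(v′)) = sleep}` for all `v ∈ {1,…,n}`, where
`s_v = ∑_{i=1}^v (1{instr_i(u(i)) = sleep} + 1{instr_{i′}(u(i′)) = sleep})` and
`f₀ = −left_u(1)`. -/

open Finset

namespace CombARW

/-- Instructions at a spine site of the comb. -/
inductive SpI | sleep | left | up | right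
deriving DecidableEq

/-- Instructions at a tooth site of the comb. -/
inductive ToI | sleep | down
deriving DecidableEq

/-- Double-sided instruction stacks on the comb graph `C_n`: `sp v` is the stack at spine
site `v ∈ {1,…,n}` and `th v` is the stack at the tooth `v′` attached to `v`. -/
structure Stacks (n : ℕ) where
  sp : ℕ → ℤ → SpI
  th : ℕ → ℤ → ToI

/-- The instruction at index `0` is `left` on the spine and `down` on the teeth. -/
def ValidStacks {n : ℕ} (St : Stacks n) : Prop :=
  ∀ v, 1 ≤ v → v ≤ n → St.sp v 0 = SpI.left ∧ St.th v 0 = ToI.down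

/-- An odometer on `C_n`: `sp v` for spine sites `v ∈ {0,…,n+1}` and `th v` for teeth. -/
structure Odom (n : ℕ) where
  sp : ℕ → ℤ
  th : ℕ → ℤ

/-- Odometers vanish at the sinks `0` and `n+1`. -/
def IsOdom {n : ℕ} (u : Odom n) : Prop := u.sp 0 = 0 ∧ u.sp (n + 1) = 0

/-- The signed number of instructions equal to `t` used by the odometer value `m` in the
stack `g`: the number of indices `1 ≤ i ≤ m` with `g i = t` if `m ≥ 0`, and minus the
number of indices `m ≤ i ≤ 0` with `g i = t` if `m < 0`. -/
noncomputable def signedCount {α : Type*} [DecidableEq α] (g : ℤ → α) (t : α) (m : ℤ) : ℤ :=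
  if 0 ≤ m then ((Finset.Icc 1 m).filter fun i => g i = t).card
  else -(((Finset.Icc m 0).filter fun i => g i = t).card : ℤ)

variable {n : ℕ}

/-- `left_u(v)`: the signed number of `left` instructions used at spine site `v`
(zero at the sinks). -/
noncomputable def leftC (St : Stacks n) (u : Odom n) (v : ℕ) : ℤ :=
  if 1 ≤ v ∧ v ≤ n then signedCount (St.sp v) SpI.left (u.sp v) else 0

/-- `right_u(v)`. -/
noncomputable def rightC (St : Stacks n) (u : Odom n) (v : ℕ) : ℤ :=
  if 1 ≤ v ∧ v ≤ n then signedCount (St.sp v) SpI.right (u.sp v) else 0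

/-- `up_u(v)`. -/
noncomputable def upC (St : Stacks n) (u : Odom n) (v : ℕ) : ℤ :=
  if 1 ≤ v ∧ v ≤ n then signedCount (St.sp v) SpI.up (u.sp v) else 0

/-- `down_u(v′)`: the signed number of `down` instructions used at the tooth `v′`. -/
noncomputable def downC (St : Stacks n) (u : Odom n) (v : ℕ) : ℤ :=
  if 1 ≤ v ∧ v ≤ n then signedCount (St.th v) ToI.down (u.th v) else 0

/-- A site of the comb holds either `k` active particles or a single sleeping particle. -/
inductive SiteState | act : ℕ → SiteState | sleeper
deriving DecidableEq

/-- `|σ(v)|`: the number of particles at a site, with `|𝔰| = 1`. -/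
def SiteState.card : SiteState → ℕ
  | act k => k
  | sleeper => 1

/-- A particle configuration on `C_n` (spine and teeth). -/
structure Config (n : ℕ) where
  sp : ℕ → SiteState
  th : ℕ → SiteState

/-- `|σ(v)| + |σ(v′)|`. -/
def cfgWt (σ : Config n) (i : ℕ) : ℤ := ((σ.sp i).card : ℤ) + ((σ.th i).card : ℤ)

/-- `h(v) = |σ(v)| + In(v;u) − Out(v;u)` at the spine site `v`. -/
noncomputable def hSp (St : Stacks n) (σ : Config n) (u : Odom n) (v : ℕ) : ℤ :=
  ((σ.sp v).card : ℤ) + (rightC St u (v - 1) + leftC St u (v + 1) + downC St u v)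
    - (rightC St u v + leftC St u v + upC St u v)

/-- `h(v′) = |σ(v′)| + In(v′;u) − Out(v′;u)` at the tooth `v′`. -/
noncomputable def hTh (St : Stacks n) (σ : Config n) (u : Odom n) (v : ℕ) : ℤ :=
  ((σ.th v).card : ℤ) + upC St u v - downC St u v

/-- The odometer `u` is *stable* under `σ, instr`: at every non-sink site the flow balance
`h(v)` lies in `{0,1}`, with `h(v) = 1` iff the last used instruction is `sleep`. -/
def IsStable (St : Stacks n) (σ : Config n) (u : Odom n) : Prop :=
  ∀ v, 1 ≤ v → v ≤ n →
    ((hSp St σ u v = 0 ∨ hSp St σ u v = 1) ∧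
      (hSp St σ u v = 1 ↔ St.sp v (u.sp v) = SpI.sleep)) ∧
    ((hTh St σ u v = 0 ∨ hTh St σ u v = 1) ∧
      (hTh St σ u v = 1 ↔ St.th v (u.th v) = ToI.sleep))

/-- `S_n(instr, σ, f₀)`: the stable odometers with net flow `−left_u(1) = f₀` from site
`0` to site `1`. -/
def StableSet (St : Stacks n) (σ : Config n) (f0 : ℤ) : Set (Odom n) :=
  {u | IsOdom u ∧ IsStable St σ u ∧ -leftC St u 1 = f0}

/-- `m` is *the minimal odometer* of `S_n(instr, σ, f₀)`: `m(0) = 0 = m(n+1)`, each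
`m(v)` is the least integer whose `left`-count matches the inflow
`right_m(v−1) − f₀ − ∑_{i<v}(|σ(i)|+|σ(i′)|)`, and each `m(v′)` is the least integer
whose `down`-count is `up_m(v) + |σ(v′)|`. -/
def MinOdomSpec (St : Stacks n) (σ : Config n) (f0 : ℤ) (m : Odom n) : Prop :=
  m.sp 0 = 0 ∧ m.sp (n + 1) = 0 ∧
  ∀ v, 1 ≤ v → v ≤ n →
    IsLeast {x : ℤ | signedCount (St.sp v) SpI.left x
        = rightC St m (v - 1) - f0 - ∑ i ∈ Finset.Icc 1 (v - 1), cfgWt σ i} (m.sp v) ∧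
    IsLeast {x : ℤ | signedCount (St.th v) ToI.down x
        = upC St m v + ((σ.th v).card : ℤ)} (m.th v)

end CombARW

private lemma icc_step' (g : ℕ → ℤ) (v : ℕ) :
    ∑ i ∈ Finset.Icc 1 (v + 1), g i = (∑ i ∈ Finset.Icc 1 v, g i) + g (v + 1) :=
  Finset.sum_Icc_succ_top (Nat.succ_le_succ (Nat.zero_le v)) g

open CombARW in
/-- Stability of an odometer on the comb is equivalent to the mass
balance equations for the net flows along the spine and down the teeth. -/
theorem stable_iff_flow_equations
    (n : ℕ) (St : Stacks n) (σ : Config n) (u : Odom n)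
    (hSt : ValidStacks St) (hu : IsOdom u)
    (f : ℕ → ℤ) (hf : ∀ v, f v = rightC St u v - leftC St u (v + 1))
    (d : ℕ → ℤ) (hd : ∀ v, d v = downC St u v - upC St u v)
    (s : ℕ → ℤ) (hs : ∀ v, s v = ∑ i ∈ Finset.Icc 1 v,
      ((if St.sp i (u.sp i) = SpI.sleep then (1 : ℤ) else 0) +
        (if St.th i (u.th i) = ToI.sleep then (1 : ℤ) else 0))) :
    IsStable St σ u ↔
      ∀ v, 1 ≤ v → v ≤ n →
        f v = f 0 + (∑ i ∈ Finset.Icc 1 v, cfgWt σ i) - s v ∧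
        d v = ((σ.th v).card : ℤ) -
          (if St.th v (u.th v) = ToI.sleep then (1 : ℤ) else 0) := by
  have hSpEq : ∀ v, 1 ≤ v → hSp St σ u v =
      ((σ.sp v).card : ℤ) + d v + f (v - 1) - f v := by
    intro v hv
    have hv1 : v - 1 + 1 = v := Nat.succ_pred_eq_of_pos hv
    simp only [hSp, hd, hf, hv1]
    ring
  have hThEq : ∀ v, hTh St σ u v = ((σ.th v).card : ℤ) - d v := by
    intro v; simp only [hTh, hd]; ring
  have stabIff : IsStable St σ u ↔ ∀ v, 1 ≤ v → v ≤ n →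
      (hSp St σ u v = if St.sp v (u.sp v) = SpI.sleep then (1 : ℤ) else 0) ∧
      (hTh St σ u v = if St.th v (u.th v) = ToI.sleep then (1 : ℤ) else 0) := by
    constructor
    · intro h v h1 h2
      obtain ⟨⟨hA, hB⟩, hC, hD⟩ := h v h1 h2
      constructor
      · split_ifs with hc
        · exact hB.mpr hc
        · rcases hA with h0 | h1'
          · exact h0
          · exact absurd (hB.mp h1') hc
      · split_ifs with hc
        · exact hD.mpr hc
        · rcases hC with h0 | h1'
          · exact h0
          · exact absurd (hD.mp h1') hc
    · intro h v h1 h2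
      obtain ⟨hA, hC⟩ := h v h1 h2
      refine ⟨⟨?_, ?_, ?_⟩, ?_, ?_, ?_⟩
      · split_ifs at hA <;> omega
      · intro he; by_contra hc; rw [if_neg hc] at hA; omega
      · intro hc; rw [if_pos hc] at hA; exact hA
      · split_ifs at hC <;> omega
      · intro he; by_contra hc; rw [if_neg hc] at hC; omega
      · intro hc; rw [if_pos hc] at hC; exact hC
  rw [stabIff]
  constructor
  · intro h
    have key : ∀ v, v ≤ n → f v = f 0 + (∑ i ∈ Finset.Icc 1 v, cfgWt σ i) - s v := by
      intro v
      induction v with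
      | zero => intro _; simp [hs 0]
      | succ v ih =>
        intro hvn
        have ihv := ih (Nat.le_of_succ_le hvn)
        obtain ⟨h1, h2⟩ := h (v + 1) (Nat.succ_le_succ (Nat.zero_le v)) hvn
        have hsp := hSpEq (v + 1) (Nat.succ_le_succ (Nat.zero_le v))
        simp only [Nat.add_sub_cancel] at hsp
        rw [hsp] at h1
        rw [hThEq (v + 1)] at h2
        rw [hs (v + 1), icc_step', icc_step', ← hs v]
        have hw : cfgWt σ (v + 1)
            = ((σ.sp (v + 1)).card : ℤ) + ((σ.th (v + 1)).card : ℤ) := rfl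
        rw [hw]
        linarith [h1, h2, ihv]
    intro v h1 h2
    refine ⟨key v h2, ?_⟩
    have h2' := (h v h1 h2).2
    rw [hThEq v] at h2'
    linarith
  · intro h v h1 h2
    obtain ⟨w, rfl⟩ : ∃ w, v = w + 1 := ⟨v - 1, (Nat.succ_pred_eq_of_pos h1).symm⟩
    obtain ⟨hfv, hdv⟩ := h (w + 1) h1 h2
    have hth := hThEq (w + 1)
    have hsp := hSpEq (w + 1) h1
    simp only [Nat.add_sub_cancel] at hsp
    have fprev : f w = f 0 + (∑ i ∈ Finset.Icc 1 w, cfgWt σ i) - s w := by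
      rcases Nat.eq_zero_or_pos w with hw0 | hw1
      · subst hw0; simp [hs 0]
      · exact (h w hw1 (by omega)).1
    rw [hs (w + 1), icc_step', icc_step', ← hs w] at hfv
    have hw : cfgWt σ (w + 1)
        = ((σ.sp (w + 1)).card : ℤ) + ((σ.th (w + 1)).card : ℤ) := rfl
    rw [hw] at hfv
    constructor
    · rw [hsp]; linarith [hdv, fprev]
    · rw [hth]; linarith [hdv]
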